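/- Assume N = 1 and Q satisfies (H-EL) and (H-R). Then there exists a constant C > 0 such that for every K ≥ 1 there exists δ_K > 0 with the following property: for every u₀ ∈ 𝒜 ∩ [1/K, K] (and, in case lim_{s→+∞} R(s) < +∞, for every u₀ ∈ 𝒜 ∩ [1/K, +∞)), the solution u of (P_{u₀}) with supp u = [−r̄, r̄] satisfies u(x) ≥ C·(r̄ − x)^{2/(m+1)} for all x ∈ (r̄ − δ_K, r̄). -/

import Mathlib

open MeasureTheory Filter Set

noncomputable section

/-- Hypothesis (H): `Q` is continuous on `(0,∞)`, vanishes on `(-∞,0]`, is bounded below,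
and `Q(s) ~ A·s^(1-m)` as `s → 0⁺`. -/
def HypH (Q : ℝ → ℝ) (A m : ℝ) : Prop :=
  ContinuousOn Q (Set.Ioi 0) ∧ (∀ s : ℝ, s ≤ 0 → Q s = 0) ∧ BddBelow (Set.range Q) ∧
  0 < A ∧ 1 < m ∧
  Filter.Tendsto (fun s : ℝ => Q s / (A * s ^ (1 - m))) (nhdsWithin 0 (Set.Ioi 0)) (nhds 1)

/-- `Q` is C¹ on `(0,∞)`. -/
def HypC1 (Q : ℝ → ℝ) : Prop :=
  (∀ s : ℝ, 0 < s → DifferentiableAt ℝ Q s) ∧ ContinuousOn (deriv Q) (Set.Ioi 0)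

/-- Hypothesis (H-EL1): (H) with `1 < m < 3` and `Q` of class C¹ on `(0,∞)`. -/
def HypHEL1 (Q : ℝ → ℝ) (A m : ℝ) : Prop := HypH Q A m ∧ m < 3 ∧ HypC1 Q

/-- Hypothesis (H-EL): (H-EL1) together with `|s·Q'(s)| ≤ C·Q(s)` for `s` small. -/
def HypHEL (Q : ℝ → ℝ) (A m : ℝ) : Prop :=
  HypHEL1 Q A m ∧ ∃ C > (0:ℝ), ∃ s₀ > (0:ℝ), ∀ s : ℝ, 0 < s → s < s₀ →
    |s * deriv Q s| ≤ C * Q s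

/-- `R(s) = Q(s)/s`. -/
def Rfun (Q : ℝ → ℝ) : ℝ → ℝ := fun s => Q s / s

/-- Hypothesis (H-R): `R' ≠ 0` on `(0,δ) ∪ (1/δ,∞)` for some `δ ∈ (0,1)`. -/
def HypHR (Q : ℝ → ℝ) : Prop :=
  ∃ δ : ℝ, 0 < δ ∧ δ < 1 ∧ ∀ s : ℝ, (0 < s ∧ s < δ) ∨ 1/δ < s → deriv (Rfun Q) s ≠ 0

/-- `u ∈ H¹(ℝ)` with weak derivative `g`: `u` is continuous, `u, g ∈ L²`, and the
fundamental theorem of calculus holds. -/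
def MemH1 (u g : ℝ → ℝ) : Prop :=
  Continuous u ∧ MeasureTheory.MemLp u 2 MeasureTheory.volume ∧
  MeasureTheory.MemLp g 2 MeasureTheory.volume ∧
  ∀ a b : ℝ, a ≤ b → u b - u a = ∫ t in a..b, g t

/-- `u ∈ D_M` (with weak derivative `g`): `u ∈ H¹(ℝ)`, `u ≥ 0`, `∫ u = M`. -/
def InD (M : ℝ) (u g : ℝ → ℝ) : Prop :=
  MemH1 u g ∧ (∀ x, 0 ≤ u x) ∧ (∫ x, u x) = M

/-- The energy `E[u] = ∫ (½ u'² + Q(u))`. -/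
def Energy (Q u g : ℝ → ℝ) : ℝ := ∫ x, ((1/2) * (g x)^2 + Q (u x))

/-- `u` is a (global) minimizer of `E` in `D_M`. -/
def IsMinimizer (Q : ℝ → ℝ) (M : ℝ) (u : ℝ → ℝ) : Prop :=
  ∃ g, InD M u g ∧ MeasureTheory.Integrable (fun x => Q (u x)) ∧
    ∀ v h, InD M v h → MeasureTheory.Integrable (fun x => Q (v x)) →
      Energy Q u g ≤ Energy Q v h

/-- The admissible set `𝒜 = {s > 0 : R'(s) < 0 and R(t) > R(s) for all 0 < t < s}`. -/
def Aset (Q : ℝ → ℝ) : Set ℝ :=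
  {s : ℝ | 0 < s ∧ deriv (Rfun Q) s < 0 ∧ ∀ t, 0 < t → t < s → Rfun Q s < Rfun Q t}

/-- `e` is the smallest global minimum point of `R` on `(0,∞)` (so `e_* = e < ∞`). -/
def IsEStar (Q : ℝ → ℝ) (e : ℝ) : Prop :=
  0 < e ∧ (∀ t, 0 < t → Rfun Q e ≤ Rfun Q t) ∧
    ∀ s, 0 < s → (∀ t, 0 < t → Rfun Q s ≤ Rfun Q t) → e ≤ s

/-- `R` attains no global minimum on `(0,∞)` (so `e_* = +∞`). -/
def EStarInfinite (Q : ℝ → ℝ) : Prop :=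
  ¬ ∃ s : ℝ, 0 < s ∧ ∀ t, 0 < t → Rfun Q s ≤ Rfun Q t

/-- A solution of problem `(P_{u₀})`: nonnegative, even, continuous, with positivity set
`(-r̄, r̄)` (`r̄ ∈ (0,+∞]`), C² there, solving `-u'' + Q'(u) = R(u₀)`, `u(0) = u₀`, `u'(0) = 0`. -/
def IsPSol (Q : ℝ → ℝ) (u₀ : ℝ) (u : ℝ → ℝ) (r : EReal) : Prop :=
  0 < r ∧ (∀ x, 0 ≤ u x) ∧ (∀ x, u (-x) = u x) ∧ Continuous u ∧
  {x : ℝ | 0 < u x} = {x : ℝ | -r < (x : EReal) ∧ (x : EReal) < r} ∧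
  ContDiffOn ℝ 2 u {x : ℝ | 0 < u x} ∧
  (∀ x : ℝ, -r < (x : EReal) → (x : EReal) < r →
    -(deriv (deriv u) x) + deriv Q (u x) = Rfun Q u₀) ∧
  u 0 = u₀ ∧ deriv u 0 = 0

/-!
Multiplying the equation by `u'` gives the first integral `u'² = 2 (Q(u) - R(u₀) u)`. For
`u₀ ∈ 𝒜` with `u₀ ≥ 1/K`, `R(u₀)` lies between `-K·|inf Q|` and `R(1/(2K))`, so for `s` below
some `s₁ = s₁(K)` the term `A s^(1-m)` of `Q` dominates `R(u₀) s` and `u'² ≥ (A/2) u^(1-m)`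
wherever `u < s₁`. Then `|(u^((m+1)/2))'| ≥ √(A/2)`, and the mean value theorem between `x`
and the contact point `r̄` gives `u(x)^((m+1)/2) ≥ √(A/2) (r̄ - x)`. That `u < s₁` on
`(r̄ - δ_K, r̄)` holds because `|u'|` is bounded by some `G(K)` while `u` crosses the band
`[s₁/2, s₁]`, which therefore takes time at least `s₁ / (2G)`.
-/

open Topology

theorem energy_eq_of_deriv_deriv_eq {u Q : ℝ → ℝ} {I : Set ℝ} {c a b : ℝ} (hI : IsOpen I)
    (hI' : IsPreconnected I) (hu : ContDiffOn ℝ 2 u I)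
    (hQ : ∀ z ∈ I, DifferentiableAt ℝ Q (u z))
    (hode : ∀ z ∈ I, deriv (deriv u) z = deriv Q (u z) - c) (ha : a ∈ I) (hb : b ∈ I) :
    deriv u b ^ 2 / 2 - Q (u b) + c * u b = deriv u a ^ 2 / 2 - Q (u a) + c * u a := by
  have hu' : ∀ z ∈ I, HasDerivAt u (deriv u z) z := fun z hz =>
    ((hu.differentiableOn two_ne_zero).differentiableAt (hI.mem_nhds hz)).hasDerivAt
  have hu'' : ∀ z ∈ I, HasDerivAt (deriv u) (deriv (deriv u) z) z := fun z hz =>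
    (((hu.deriv_of_isOpen hI (by norm_num)).differentiableOn one_ne_zero).differentiableAt
      (hI.mem_nhds hz)).hasDerivAt
  have hE : ∀ z ∈ I, HasDerivAt (fun t => deriv u t ^ 2 / 2 - Q (u t) + c * u t) 0 z := by
    intro z hz
    refine ((((hu'' z hz).pow 2).div_const 2).sub
      ((hQ z hz).hasDerivAt.comp z (hu' z hz))).add ((hu' z hz).const_mul c) |>.congr_deriv ?_
    rw [hode z hz]
    push_cast
    ring
  exact hI.is_const_of_deriv_eq_zero hI'
    (fun z hz => (hE z hz).differentiableAt.differentiableWithinAt) (fun z hz => (hE z hz).deriv)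
    hb ha

theorem sub_le_mul_of_abs_deriv_le_on_band {f f' : ℝ → ℝ} {y z α β G : ℝ} (hyz : y ≤ z)
    (hf : ContinuousOn f (Icc y z)) (hf' : ∀ t ∈ Ioo y z, HasDerivAt f (f' t) t)
    (hG : ∀ t ∈ Ioo y z, f t ∈ Icc α β → |f' t| ≤ G) (hαβ : α < β) (hy : β ≤ f y)
    (hz : f z ≤ α) : β - α ≤ G * (z - y) := by
  -- `b` is the first time `f` reaches `α`, and `a` the last time before `b` that `f` is at `β`.
  set T := Icc y z ∩ f ⁻¹' Iic α
  have hT : IsClosed T := hf.preimage_isClosed_of_isClosed isClosed_Icc isClosed_Iic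
  have hbT : sInf T ∈ T := hT.csInf_mem ⟨z, ⟨hyz, le_rfl⟩, hz⟩ ⟨y, fun t ht => ht.1.1⟩
  set b := sInf T
  set S := Icc y b ∩ f ⁻¹' Ici β
  have hS : IsClosed S := (hf.mono (Icc_subset_Icc_right hbT.1.2)).preimage_isClosed_of_isClosed
    isClosed_Icc isClosed_Ici
  have haS : sSup S ∈ S := hS.csSup_mem ⟨y, ⟨le_rfl, hbT.1.1⟩, hy⟩ ⟨b, fun t ht => ht.1.2⟩
  set a := sSup S
  have hab : a < b := lt_of_le_of_ne haS.1.2 fun h => by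
    have : β ≤ α := (h ▸ haS.2 : β ≤ f b).trans hbT.2
    linarith
  have hband : ∀ t ∈ Ioo a b, f t ∈ Icc α β := fun t ht => by
    constructor
    · by_contra! h
      exact (csInf_le (s := T) ⟨y, fun s hs => hs.1.1⟩
        ⟨⟨haS.1.1.trans ht.1.le, ht.2.le.trans hbT.1.2⟩, h.le⟩).not_gt ht.2
    · by_contra! h
      exact (le_csSup (s := S) ⟨b, fun s hs => hs.1.2⟩
        ⟨⟨haS.1.1.trans ht.1.le, ht.2.le⟩, h.le⟩).not_gt ht.1
  have hsub : Ioo a b ⊆ Ioo y z := Ioo_subset_Ioo haS.1.1 hbT.1.2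
  obtain ⟨ξ, hξ, hslope⟩ := exists_hasDerivAt_eq_slope f f' hab
    (hf.mono (Icc_subset_Icc haS.1.1 hbT.1.2)) fun t ht => hf' t (hsub ht)
  have hξG : |f' ξ| ≤ G := hG ξ (hsub hξ) (hband ξ hξ)
  have hdrop : f a - f b = -f' ξ * (b - a) := by
    rw [hslope]
    field_simp [(sub_pos.2 hab).ne']
    ring
  have hfa : β ≤ f a := haS.2
  have hfb : f b ≤ α := hbT.2
  calc β - α ≤ f a - f b := by linarith
    _ ≤ G * (b - a) := by
      rw [hdrop]
      exact mul_le_mul_of_nonneg_right ((neg_le_abs _).trans hξG) (sub_pos.2 hab).le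
    _ ≤ G * (z - y) := mul_le_mul_of_nonneg_left (by linarith [haS.1.1, hbT.1.2])
      ((abs_nonneg _).trans hξG)

theorem rpow_mul_rpow_le_of_sq_deriv_ge {f f' : ℝ → ℝ} {x r c m : ℝ} (hm : 1 < m) (hc : 0 ≤ c)
    (hxr : x < r) (hf : ContinuousOn f (Icc x r)) (hfr : f r = 0)
    (hpos : ∀ t ∈ Ico x r, 0 < f t) (hf' : ∀ t ∈ Ioo x r, HasDerivAt f (f' t) t)
    (hbound : ∀ t ∈ Ioo x r, c ^ 2 * f t ^ (1 - m) ≤ f' t ^ 2) :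
    c ^ (2 / (m + 1)) * (r - x) ^ (2 / (m + 1)) ≤ f x := by
  -- `f ^ p` with `p = (m + 1) / 2` has derivative at least `c` in absolute value.
  set p := (m + 1) / 2 with hp_def
  have hv : ContinuousOn (fun t => f t ^ p) (Icc x r) :=
    hf.rpow_const fun _ _ => Or.inr (by positivity)
  obtain ⟨ξ, hξ, hslope⟩ := exists_hasDerivAt_eq_slope (fun t => f t ^ p)
    (fun t => f' t * p * f t ^ (p - 1)) hxr hv
    fun t ht => (hf' t ht).rpow_const (Or.inl (hpos t ⟨ht.1.le, ht.2⟩).ne')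
  have hfξ : 0 < f ξ := hpos ξ ⟨hξ.1.le, hξ.2⟩
  have hslope_ge : c ≤ |f' ξ * p * f ξ ^ (p - 1)| := by
    have hcancel : f ξ ^ (1 - m) * f ξ ^ (m - 1) = 1 := by
      rw [← Real.rpow_add hfξ]; norm_num
    have hsq : (f' ξ * p * f ξ ^ (p - 1)) ^ 2 = f' ξ ^ 2 * p ^ 2 * f ξ ^ (m - 1) := by
      rw [mul_pow, mul_pow, ← Real.rpow_natCast (f ξ ^ (p - 1)), ← Real.rpow_mul hfξ.le,
        show (p - 1) * ((2:ℕ):ℝ) = m - 1 by rw [hp_def]; push_cast; ring]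
    have hp : 1 ≤ p ^ 2 := one_le_pow₀ (by rw [hp_def]; linarith)
    have : c ^ 2 ≤ (f' ξ * p * f ξ ^ (p - 1)) ^ 2 := by
      calc c ^ 2 = c ^ 2 * f ξ ^ (1 - m) * f ξ ^ (m - 1) := by rw [mul_assoc, hcancel, mul_one]
        _ ≤ f' ξ ^ 2 * f ξ ^ (m - 1) :=
          mul_le_mul_of_nonneg_right (hbound ξ hξ) (Real.rpow_nonneg hfξ.le _)
        _ ≤ f' ξ ^ 2 * f ξ ^ (m - 1) * p ^ 2 :=
          le_mul_of_one_le_right (by positivity) hp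
        _ = (f' ξ * p * f ξ ^ (p - 1)) ^ 2 := by rw [hsq]; ring
    simpa [abs_of_nonneg hc] using sq_le_sq.1 this
  have hkey : c * (r - x) ≤ f x ^ p := by
    have hx : 0 ≤ f x ^ p := Real.rpow_nonneg (hpos x ⟨le_rfl, hxr⟩).le p
    rw [hfr, Real.zero_rpow (by positivity), eq_div_iff (sub_pos.2 hxr).ne'] at hslope
    rw [← abs_of_nonneg hx, show f x ^ p = -(f' ξ * p * f ξ ^ (p - 1) * (r - x)) by linarith,
      abs_neg, abs_mul, abs_of_pos (sub_pos.2 hxr)]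
    exact mul_le_mul_of_nonneg_right hslope_ge (sub_pos.2 hxr).le
  calc c ^ (2 / (m + 1)) * (r - x) ^ (2 / (m + 1)) = (c * (r - x)) ^ (2 / (m + 1)) :=
        (Real.mul_rpow hc (sub_pos.2 hxr).le).symm
    _ ≤ (f x ^ p) ^ (2 / (m + 1)) :=
        Real.rpow_le_rpow (mul_nonneg hc (sub_pos.2 hxr).le) hkey (by positivity)
    _ = f x := by
        rw [← Real.rpow_mul (hpos x ⟨le_rfl, hxr⟩).le,
          show p * (2 / (m + 1)) = 1 by rw [hp_def]; field_simp, Real.rpow_one]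

theorem abs_Rfun_le_of_mem_Aset {Q : ℝ → ℝ} {b t u₀ : ℝ} (hb : ∀ s, b ≤ Q s)
    (hu₀ : u₀ ∈ Aset Q) (ht : 0 < t) (htu₀ : t < u₀) :
    |Rfun Q u₀| ≤ max (Rfun Q t) (|b| / t) := by
  have hu₀pos : 0 < u₀ := ht.trans htu₀
  rw [abs_le]
  constructor
  · calc -max (Rfun Q t) (|b| / t) ≤ -(|b| / t) := neg_le_neg (le_max_right _ _)
      _ ≤ -(|b| / u₀) := neg_le_neg (div_le_div_of_nonneg_left (abs_nonneg b) ht htu₀.le)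
      _ = -|b| / u₀ := by ring
      _ ≤ Q u₀ / u₀ := div_le_div_of_nonneg_right ((neg_abs_le b).trans (hb u₀)) hu₀pos.le
  · exact (hu₀.2.2 t ht htu₀).le.trans (le_max_left _ _)

namespace HypH

variable {Q : ℝ → ℝ} {A m : ℝ}

theorem eventually_coercive (hQ : HypH Q A m) (M : ℝ) :
    ∀ᶠ s in 𝓝[>] 0, A / 4 * s ^ (1 - m) + M * s ≤ Q s := by
  obtain ⟨-, -, -, hA, hm, htend⟩ := hQ
  have hhalf : ∀ᶠ s in 𝓝[>] 0, 1 / 2 < Q s / (A * s ^ (1 - m)) :=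
    htend.eventually (lt_mem_nhds (by norm_num))
  have hsmall : ∀ᶠ s in 𝓝[>] (0:ℝ), M * s ^ m < A / 4 := by
    have : Tendsto (fun s : ℝ => M * s ^ m) (𝓝[>] 0) (𝓝 0) :=
      ((continuous_const.mul (Real.continuous_rpow_const (by linarith))).tendsto' 0 0
        (by simp [Real.zero_rpow (by linarith : m ≠ 0)])).mono_left nhdsWithin_le_nhds
    exact this.eventually (gt_mem_nhds (by linarith))
  filter_upwards [hhalf, hsmall, self_mem_nhdsWithin] with s hhalf hsmall (hs : 0 < s)
  have hg : 0 < s ^ (1 - m) := Real.rpow_pos_of_pos hs _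
  have hQs : A / 2 * s ^ (1 - m) < Q s := by
    rw [lt_div_iff₀ (by positivity)] at hhalf
    linarith
  have hMs : M * s = M * s ^ m * s ^ (1 - m) := by
    rw [mul_assoc, ← Real.rpow_add hs, add_sub_cancel, Real.rpow_one]
  nlinarith

theorem exists_band (hQ : HypH Q A m) (M ε : ℝ) (hε : 0 < ε) :
    ∃ s₁ ∈ Ioo 0 ε, ∃ G > 0, (∀ s ∈ Ioc 0 s₁, A / 4 * s ^ (1 - m) + M * s ≤ Q s) ∧
      ∀ s ∈ Icc (s₁ / 2) s₁, 2 * (Q s + M * s₁) ≤ G ^ 2 := by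
  obtain ⟨ε', (hε' : 0 < ε'), hsub⟩ :=
    mem_nhdsGT_iff_exists_Ioo_subset.1 (hQ.eventually_coercive M)
  set s₁ := min (ε' / 2) (ε / 2)
  have hs₁ : 0 < s₁ := lt_min (by linarith) (by linarith)
  obtain ⟨B, hB⟩ := (isCompact_Icc (a := s₁ / 2) (b := s₁)).bddAbove_image
    (hQ.1.mono fun s hs => show 0 < s by linarith [hs.1])
  refine ⟨s₁, ⟨hs₁, (min_le_right _ _).trans_lt (by linarith)⟩, |2 * (B + M * s₁)| + 1,
    by positivity, fun s hs => hsub ⟨hs.1, hs.2.trans_lt ?_⟩, fun s hs => ?_⟩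
  · exact (min_le_left _ _).trans_lt (by linarith)
  · have := hB (mem_image_of_mem Q hs)
    nlinarith [le_abs_self (2 * (B + M * s₁)), abs_nonneg (2 * (B + M * s₁))]

end HypH

namespace IsPSol

variable {Q u : ℝ → ℝ} {u₀ r : ℝ}

theorem pos_iff (h : IsPSol Q u₀ u r) (z : ℝ) : 0 < u z ↔ z ∈ Ioo (-r) r := by
  simpa [← EReal.coe_neg, EReal.coe_lt_coe_iff] using Set.ext_iff.1 h.2.2.2.2.1 z

theorem zero_mem (h : IsPSol Q u₀ u r) : (0:ℝ) ∈ Ioo (-r) r := by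
  have hr : 0 < r := EReal.coe_pos.1 h.1
  exact ⟨neg_neg_iff_pos.2 hr, hr⟩

theorem apply_right_eq_zero (h : IsPSol Q u₀ u r) : u r = 0 :=
  le_antisymm (not_lt.1 fun hr => (lt_irrefl r ((h.pos_iff r).1 hr).2)) (h.2.1 r)

theorem contDiffOn (h : IsPSol Q u₀ u r) : ContDiffOn ℝ 2 u (Ioo (-r) r) := by
  convert h.2.2.2.2.2.1 using 1
  ext y
  exact (h.pos_iff y).symm

theorem hasDerivAt (h : IsPSol Q u₀ u r) {z : ℝ} (hz : z ∈ Ioo (-r) r) :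
    HasDerivAt u (deriv u z) z :=
  ((h.contDiffOn.differentiableOn two_ne_zero).differentiableAt
    (isOpen_Ioo.mem_nhds hz)).hasDerivAt

theorem deriv_sq_eq (h : IsPSol Q u₀ u r) (hQ : ∀ s, 0 < s → DifferentiableAt ℝ Q s) {z : ℝ}
    (hz : z ∈ Ioo (-r) r) : deriv u z ^ 2 = 2 * (Q (u z) - Rfun Q u₀ * u z) := by
  obtain ⟨-, -, -, -, -, -, hode, hu0, hu'0⟩ := id h
  have hu₀ : 0 < u₀ := hu0 ▸ (h.pos_iff 0).2 h.zero_mem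
  have henergy := energy_eq_of_deriv_deriv_eq (c := Rfun Q u₀) isOpen_Ioo isPreconnected_Ioo
    h.contDiffOn (fun y hy => hQ _ ((h.pos_iff y).2 hy))
    (fun y hy => by
      have := hode y (by rw [← EReal.coe_neg]; exact_mod_cast hy.1) (by exact_mod_cast hy.2)
      linarith) h.zero_mem hz
  have hR : Rfun Q u₀ * u₀ = Q u₀ := div_mul_cancel₀ _ hu₀.ne'
  rw [hu'0, hu0, hR] at henergy
  linarith

theorem apply_lt_of_sub_lt (h : IsPSol Q u₀ u r) (hQ : ∀ s, 0 < s → DifferentiableAt ℝ Q s)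
    {M s₁ G y : ℝ} (hR₀ : |Rfun Q u₀| ≤ M)
    (hband : ∀ s ∈ Icc (s₁ / 2) s₁, 2 * (Q s + M * s₁) ≤ G ^ 2) (hs₁ : 0 < s₁) (hG : 0 < G)
    (hy : y ∈ Ioo (-r) r) (hry : r - y < s₁ / (2 * G)) : u y < s₁ := by
  by_contra! hge
  have hyr : Ioo y r ⊆ Ioo (-r) r := Ioo_subset_Ioo_left hy.1.le
  have hderiv_le : ∀ t ∈ Ioo y r, u t ∈ Icc (s₁ / 2) s₁ → |deriv u t| ≤ G := by
    intro t ht hut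
    have hRu : -(Rfun Q u₀ * u t) ≤ M * s₁ :=
      calc -(Rfun Q u₀ * u t) = -Rfun Q u₀ * u t := by ring
        _ ≤ M * u t := mul_le_mul_of_nonneg_right ((neg_le_abs _).trans hR₀) (by linarith [hut.1])
        _ ≤ M * s₁ := mul_le_mul_of_nonneg_left hut.2 ((abs_nonneg _).trans hR₀)
    refine abs_le_of_sq_le_sq ?_ hG.le
    rw [h.deriv_sq_eq hQ (hyr ht)]
    linarith [hband (u t) hut]
  have hcross := sub_le_mul_of_abs_deriv_le_on_band hy.2.le h.2.2.2.1.continuousOn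
    (fun t ht => h.hasDerivAt (hyr ht)) hderiv_le (by linarith) hge
    (by rw [h.apply_right_eq_zero]; linarith)
  rw [lt_div_iff₀ (by positivity)] at hry
  linarith

end IsPSol

theorem stmt12_general (Q : ℝ → ℝ) (A m : ℝ) (hQ : HypHEL Q A m) :
    ∃ C > (0:ℝ), ∀ K : ℝ, 1 ≤ K → ∃ δ > (0:ℝ),
      ∀ (u₀ : ℝ) (u : ℝ → ℝ) (r : ℝ),
        u₀ ∈ Aset Q → 1/K ≤ u₀ →
        (u₀ ≤ K ∨ ∃ L : ℝ, Filter.Tendsto (Rfun Q) Filter.atTop (nhds L)) →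
        IsPSol Q u₀ u (r : EReal) → tsupport u = Set.Icc (-r) r →
        ∀ x : ℝ, r - δ < x → x < r → C * (r - x) ^ ((2:ℝ)/(m+1)) ≤ u x := by
  obtain ⟨⟨hH, -, hQd, -⟩, -⟩ := hQ
  obtain ⟨-, -, ⟨b, hb⟩, hA, hm, -⟩ := id hH
  refine ⟨√(A / 2) ^ ((2:ℝ) / (m + 1)), by positivity, fun K hK => ?_⟩
  set M := max (Rfun Q (1 / (2 * K))) (|b| / (1 / (2 * K)))
  obtain ⟨s₁, ⟨hs₁, hs₁K⟩, G, hG, hcoer, hband⟩ := hH.exists_band M (1 / (2 * K)) (by positivity)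
  refine ⟨s₁ / (2 * G), by positivity, fun u₀ u r hu₀ hKu₀ _ hsol _ x hxδ hxr => ?_⟩
  have hKu₀' : 1 / (2 * K) < u₀ := lt_of_lt_of_le (by gcongr; linarith) hKu₀
  have hR₀ : |Rfun Q u₀| ≤ M :=
    abs_Rfun_le_of_mem_Aset (fun s => hb ⟨s, rfl⟩) hu₀ (by positivity) hKu₀'
  have hsmall : ∀ y ∈ Ioo (-r) r, r - y < s₁ / (2 * G) → u y < s₁ :=
    fun y hy hry => hsol.apply_lt_of_sub_lt hQd hR₀ hband hs₁ hG hy hry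
  have hIoo : ∀ y ∈ Ico x r, y ∈ Ioo (-r) r := by
    obtain ⟨-, -, -, -, -, -, -, hu0, -⟩ := id hsol
    have hx : 0 < x := by
      by_contra! hx0
      linarith [hu0 ▸ hsmall 0 hsol.zero_mem (by linarith)]
    exact fun y hy => ⟨by linarith [hy.1, hsol.zero_mem.1], hy.2⟩
  refine rpow_mul_rpow_le_of_sq_deriv_ge hm (Real.sqrt_nonneg _) hxr
    hsol.2.2.2.1.continuousOn hsol.apply_right_eq_zero
    (fun y hy => (hsol.pos_iff y).2 (hIoo y hy))
    (fun y hy => hsol.hasDerivAt (hIoo y (Ioo_subset_Ico_self hy))) (fun y hy => ?_)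
  have hy' := hIoo y (Ioo_subset_Ico_self hy)
  have huy : 0 < u y := (hsol.pos_iff y).2 hy'
  have hcoer_y := hcoer (u y) ⟨huy, (hsmall y hy' (by linarith [hy.1])).le⟩
  have hRu : Rfun Q u₀ * u y ≤ M * u y :=
    mul_le_mul_of_nonneg_right ((le_abs_self _).trans hR₀) huy.le
  rw [hsol.deriv_sq_eq hQd hy', Real.sq_sqrt (by positivity)]
  linarith

/-- Uniform a-priori lower bound near the contact line: there is `C > 0` such that for all
`K ≥ 1` there is `δ_K > 0` with `u(x) ≥ C(r̄-x)^{2/(m+1)}` on `(r̄-δ_K, r̄)` for every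
solution of `(P_{u₀})` with `u₀ ∈ 𝒜 ∩ [1/K, K]` (or `u₀ ∈ 𝒜 ∩ [1/K, ∞)` when
`R(+∞) < ∞`). -/
theorem stmt12 (Q : ℝ → ℝ) (A m : ℝ) (hQ : HypHEL Q A m) (hR : HypHR Q) :
    ∃ C > (0:ℝ), ∀ K : ℝ, 1 ≤ K → ∃ δ > (0:ℝ),
      ∀ (u₀ : ℝ) (u : ℝ → ℝ) (r : ℝ),
        u₀ ∈ Aset Q → 1/K ≤ u₀ →
        (u₀ ≤ K ∨ ∃ L : ℝ, Filter.Tendsto (Rfun Q) Filter.atTop (nhds L)) →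
        IsPSol Q u₀ u (r : EReal) → tsupport u = Set.Icc (-r) r →
        ∀ x : ℝ, r - δ < x → x < r → C * (r - x) ^ ((2:ℝ)/(m+1)) ≤ u x :=
  stmt12_general Q A m hQ
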